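/- Fix β > 0 and k ∈ ℕ. The space F_0 of pairs (Γ,p), where Γ = (g_1,…,g_k) is a k-tuple of homeomorphisms of [0,1] belonging to C^+_β and p = (p_1,…,p_k) is a probability vector, equipped with d((Γ,p),(Δ,q)) = Σ_{i=1}^k (|p_i − q_i| + ‖g_i − h_i‖_∞ + ‖g_i^{-1} − h_i^{-1}‖_∞ + sup_{[0,β]∪[1−β,1]} |g_i' − h_i'|), is a complete metric space. -/

import Mathlib

open MeasureTheory Set Filter Topology

noncomputable section

/-- The Markov operator of an iterated function system `(g, p)` on `[0,1]`. -/
def markovOp {k : ℕ} (g : Fin k → ℝ → ℝ) (p : Fin k → ℝ) (μ : Measure ℝ) : Measure ℝ :=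
  ∑ i : Fin k, ENNReal.ofReal (p i) • Measure.map (g i) μ

/-- `p` is a probability vector. -/
def ProbVec {k : ℕ} (p : Fin k → ℝ) : Prop :=
  (∀ i, 0 ≤ p i) ∧ ∑ i : Fin k, p i = 1

/-- Membership in `M₁(0,1)`: Borel probability measures on `[0,1]` giving full mass
to the open interval `(0,1)`. -/
def MemM1 (μ : Measure ℝ) : Prop :=
  IsProbabilityMeasure μ ∧ μ (Ioo (0 : ℝ) 1) = 1

/-- The set `N_{M,α}`. -/
def Nset (M α : ℝ) : Set (Measure ℝ) :=
  {μ | MemM1 μ ∧ ∀ x ∈ Icc (0 : ℝ) 1,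
    μ (Icc (0 : ℝ) x) ≤ ENNReal.ofReal (M * x ^ α) ∧
    μ (Icc (1 - x) 1) ≤ ENNReal.ofReal (M * x ^ α)}

/-- The class `C⁺_β`: continuous nondecreasing maps of `[0,1]` fixing `0` and `1`,
continuously differentiable on `[0,β]` and `[1-β,1]`. -/
structure CPlus (β : ℝ) (g : ℝ → ℝ) : Prop where
  mapsTo : MapsTo g (Icc (0 : ℝ) 1) (Icc (0 : ℝ) 1)
  contOn : ContinuousOn g (Icc (0 : ℝ) 1)
  mono : MonotoneOn g (Icc (0 : ℝ) 1)
  map_zero : g 0 = 0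
  map_one : g 1 = 1
  c1_left : ContDiffOn ℝ 1 g (Icc (0 : ℝ) β)
  c1_right : ContDiffOn ℝ 1 g (Icc (1 - β) 1)

/-- `g` is a homeomorphism of `[0,1]` (a continuous bijection of the compact
interval; continuity of the inverse is automatic). -/
def IsIccHomeo (g : ℝ → ℝ) : Prop :=
  MapsTo g (Icc (0 : ℝ) 1) (Icc (0 : ℝ) 1) ∧ InjOn g (Icc (0 : ℝ) 1) ∧
    SurjOn g (Icc (0 : ℝ) 1) (Icc (0 : ℝ) 1)

/-- Admissible iterated function system generated by homeomorphisms in `C⁺_β`: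
strictly positive probabilities, maps moving every interior point both down and up,
and positive Lyapunov exponents at the common fixed points `0` and `1`
(the one-sided derivatives there being positive). -/
structure Admissible (β : ℝ) {k : ℕ} (g : Fin k → ℝ → ℝ) (p : Fin k → ℝ) : Prop where
  cplus : ∀ i, CPlus β (g i)
  homeo : ∀ i, IsIccHomeo (g i)
  p_pos : ∀ i, 0 < p i
  p_sum : ∑ i : Fin k, p i = 1
  below : ∀ x ∈ Ioo (0 : ℝ) 1, ∃ i, g i x < x
  above : ∀ x ∈ Ioo (0 : ℝ) 1, ∃ j, x < g j x
  deriv0_pos : ∀ i, 0 < derivWithin (g i) (Icc (0 : ℝ) 1) 0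
  deriv1_pos : ∀ i, 0 < derivWithin (g i) (Icc (0 : ℝ) 1) 1
  lyap0 : 0 < ∑ i : Fin k, p i * Real.log (derivWithin (g i) (Icc (0 : ℝ) 1) 0)
  lyap1 : 0 < ∑ i : Fin k, p i * Real.log (derivWithin (g i) (Icc (0 : ℝ) 1) 1)

/-- Composition of the maps of an IFS along a finite word:
`wordComp g [i_n, …, i_1] = g i_n ∘ ⋯ ∘ g i_1`. -/
def wordComp {k : ℕ} (g : Fin k → ℝ → ℝ) : List (Fin k) → ℝ → ℝ
  | [], x => x
  | i :: w, x => g i (wordComp g w x)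

/-- Composition of the first `n` maps along an infinite word `ω`:
`iterComp g ω n = g (ω (n-1)) ∘ ⋯ ∘ g (ω 0)`. -/
def iterComp {k : ℕ} (g : Fin k → ℝ → ℝ) (ω : ℕ → Fin k) : ℕ → ℝ → ℝ
  | 0 => id
  | n + 1 => g (ω n) ∘ iterComp g ω n

/-- Supremum of `|f|` over a set `K`. -/
def supOn (K : Set ℝ) (f : ℝ → ℝ) : ℝ :=
  sSup ((fun x => |f x|) '' K)

/-- The Fortet–Mourier distance: the Fortet–Mourier norm of `μ - ν`. -/
def FMdist (μ ν : Measure ℝ) : ℝ :=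
  sSup {r | ∃ f : ℝ → ℝ, (∀ x, |f x| ≤ 1) ∧ LipschitzWith 1 f ∧
    r = (∫ x, f x ∂μ) - ∫ x, f x ∂ν}

/-- The distance `d₀` between two iterated function systems. -/
def dzero {k : ℕ} (S T : Fin k → ℝ → ℝ) (p q : Fin k → ℝ) : ℝ :=
  ∑ i : Fin k, (|p i - q i| + supOn (Icc (0 : ℝ) 1) (fun x => S i x - T i x))

/-- `g` is absolutely continuous on `[0,1]`. -/
def AbsCont (g : ℝ → ℝ) : Prop :=
  ∀ ε > 0, ∃ δ > 0, ∀ n : ℕ, ∀ a b : Fin n → ℝ,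
    (∀ i, 0 ≤ a i ∧ a i ≤ b i ∧ b i ≤ 1) →
    (Pairwise fun i j => Disjoint (Ioo (a i) (b i)) (Ioo (a j) (b j))) →
    ∑ i, (b i - a i) < δ → ∑ i, |g (b i) - g (a i)| < ε

/-- Membership in `M₁^ε`: some Borel subset of `[0,1]` of Lebesgue measure `< ε`
carries `μ`-mass `> 1 - ε/2`. -/
def MemM1eps (ε : ℝ) (μ : Measure ℝ) : Prop :=
  ∃ A : Set ℝ, MeasurableSet A ∧ A ⊆ Icc (0 : ℝ) 1 ∧
    volume A < ENNReal.ofReal ε ∧ ENNReal.ofReal (1 - ε / 2) < μ A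

/-- Clamping of a real number to `[0,1]`. -/
def clampI (x : ℝ) : ℝ := max 0 (min 1 x)

/-- A point of the space `F₀`: a `k`-tuple of homeomorphisms of `[0,1]` in `C⁺_β`
(together with their inverses) and a probability vector.  The maps are normalized
outside `[0,1]` by clamping, so that they are determined by their restrictions
to `[0,1]`. -/
structure Sys (β : ℝ) (k : ℕ) where
  g : Fin k → ℝ → ℝ
  ginv : Fin k → ℝ → ℝ
  p : Fin k → ℝ
  prob : ProbVec p
  cplus : ∀ i, CPlus β (g i)
  ginv_mapsTo : ∀ i, MapsTo (ginv i) (Icc (0 : ℝ) 1) (Icc (0 : ℝ) 1)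
  left_inv : ∀ i, ∀ x ∈ Icc (0 : ℝ) 1, ginv i (g i x) = x
  right_inv : ∀ i, ∀ y ∈ Icc (0 : ℝ) 1, g i (ginv i y) = y
  g_clamp : ∀ i x, g i x = g i (clampI x)
  ginv_clamp : ∀ i x, ginv i x = ginv i (clampI x)

/-- The metric `d` on the space of systems. -/
def dSys {β : ℝ} {k : ℕ} (A B : Sys β k) : ℝ :=
  ∑ i : Fin k,
    (|A.p i - B.p i|
      + supOn (Icc (0 : ℝ) 1) (fun x => A.g i x - B.g i x)
      + supOn (Icc (0 : ℝ) 1) (fun x => A.ginv i x - B.ginv i x)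
      + max
          (supOn (Icc (0 : ℝ) β)
            (fun x => derivWithin (A.g i) (Icc (0 : ℝ) β) x -
              derivWithin (B.g i) (Icc (0 : ℝ) β) x))
          (supOn (Icc (1 - β) 1)
            (fun x => derivWithin (A.g i) (Icc (1 - β) 1) x -
              derivWithin (B.g i) (Icc (1 - β) 1) x)))

/-- The set `F`: admissible systems all of whose maps are absolutely continuous. -/
def Fset (β : ℝ) (k : ℕ) : Set (Sys β k) :=
  {A | Admissible β A.g A.p ∧ ∀ i, AbsCont (A.g i)}

/-- Closure of a set of systems with respect to the metric `dSys`. -/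
def closureSys {β : ℝ} {k : ℕ} (S : Set (Sys β k)) : Set (Sys β k) :=
  {A | ∀ ε > 0, ∃ B ∈ S, dSys A B < ε}

/-- `S` is nowhere dense in the subspace `X` (with respect to `dSys`):
every ball centered in `X` contains a point of `X` some ball around which
misses `S ∩ X`. -/
def NowhereDenseIn {β : ℝ} {k : ℕ} (X S : Set (Sys β k)) : Prop :=
  ∀ A ∈ X, ∀ ε > 0, ∃ B ∈ X, dSys A B < ε ∧ ∃ δ > 0, ∀ C ∈ X ∩ S, δ ≤ dSys B C

/-- Cesàro averages `(ν + Pν + ⋯ + P^{n-1}ν)/n` of a measure under the Markov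
operator of an IFS. -/
def cesaro {k : ℕ} (g : Fin k → ℝ → ℝ) (p : Fin k → ℝ) (ν : Measure ℝ) (n : ℕ) :
    Measure ℝ :=
  (n : ENNReal)⁻¹ • ∑ j ∈ Finset.range n, (fun m => markovOp g p m)^[j] ν



/-!
Every summand of `d` is the sup-distance of two functions that are continuous on a compact
set (the inverses are continuous because they are monotone surjections of `[0,1]`), so `d` is
a pseudometric, and it separates points because the clamped maps are determined by their values
on `[0,1]`. Along a `d`-Cauchy sequence every component converges uniformly. The limit maps are
continuous, monotone and fix `0` and `1`; they are `C¹` on `[0,β]` and `[1-β,1]` because passing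
to the limit in `gₙ x = gₙ a + ∫ₐˣ gₙ'` expresses the limit as the integral of the continuous
uniform limit of the derivatives. Finally `Fₙ (Gₙ y) = y` passes to the limit as soon as the
limit of `Fₙ` is continuous, which makes the limit of the inverses the inverse of the limit.
-/

section SupOn

variable {K : Set ℝ} {f g h : ℝ → ℝ}

theorem supOn_nonneg (K : Set ℝ) (f : ℝ → ℝ) : 0 ≤ supOn K f :=
  Real.sSup_nonneg (by rintro _ ⟨x, _, rfl⟩; exact abs_nonneg _)

theorem supOn_le {c : ℝ} (hc : 0 ≤ c) (hf : ∀ x ∈ K, |f x| ≤ c) : supOn K f ≤ c :=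
  Real.sSup_le (by rintro _ ⟨x, hx, rfl⟩; exact hf x hx) hc

theorem supOn_zero (K : Set ℝ) : supOn K (fun _ => 0) = 0 :=
  le_antisymm (supOn_le le_rfl fun _ _ => by simp) (supOn_nonneg K _)

theorem IsCompact.abs_le_supOn (hK : IsCompact K) (hf : ContinuousOn f K) {x : ℝ} (hx : x ∈ K) :
    |f x| ≤ supOn K f :=
  le_csSup (hK.bddAbove_image hf.abs) (mem_image_of_mem _ hx)

theorem IsCompact.supOn_sub_le_add (hK : IsCompact K) (hf : ContinuousOn f K)
    (hg : ContinuousOn g K) (hh : ContinuousOn h K) :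
    supOn K (fun x => f x - h x) ≤ supOn K (fun x => f x - g x) + supOn K (fun x => g x - h x) :=
  supOn_le (add_nonneg (supOn_nonneg _ _) (supOn_nonneg _ _)) fun _ hx =>
    (abs_sub_le _ _ _).trans
      (add_le_add (hK.abs_le_supOn (hf.sub hg) hx) (hK.abs_le_supOn (hg.sub hh) hx))

theorem TendstoUniformlyOn.tendsto_supOn_sub {ι : Type*} {l : Filter ι} {F : ι → ℝ → ℝ}
    (hF : TendstoUniformlyOn F f l K) :
    Tendsto (fun n => supOn K (fun x => F n x - f x)) l (𝓝 0) := by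
  refine tendsto_order.2 ⟨fun a ha => .of_forall fun n => ha.trans_le (supOn_nonneg _ _),
    fun a ha => ?_⟩
  filter_upwards [Metric.tendstoUniformlyOn_iff.1 hF (a / 2) (half_pos ha)] with n hn
  refine (supOn_le (half_pos ha).le fun x hx => ?_).trans_lt (half_lt_self ha)
  rw [← Real.dist_eq, dist_comm]
  exact (hn x hx).le

end SupOn

theorem uniformCauchySeqOn_of_abs_sub_le {α : Type*} {F : ℕ → α → ℝ} {s : Set α}
    {d : ℕ → ℕ → ℝ} (hd : ∀ ε > 0, ∃ N, ∀ m ≥ N, ∀ n ≥ N, d m n < ε)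
    (hF : ∀ m n, ∀ x ∈ s, |F m x - F n x| ≤ d m n) : UniformCauchySeqOn F atTop s :=
  Metric.uniformCauchySeqOn_iff.2 fun ε hε =>
    (hd ε hε).imp fun _ hN m hm n hn x hx => (hF m n x hx).trans_lt (hN m hm n hn)

theorem UniformCauchySeqOn.tendstoUniformlyOn_limUnder {ι α β : Type*} [Nonempty ι]
    [SemilatticeSup ι] [UniformSpace β] [CompleteSpace β] [Nonempty β] {F : ι → α → β}
    {s : Set α} (hF : UniformCauchySeqOn F atTop s) :
    TendstoUniformlyOn F (fun x => limUnder atTop fun n => F n x) atTop s :=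
  hF.tendstoUniformlyOn_of_tendsto fun _ hx =>
    tendsto_nhds_limUnder (cauchySeq_tendsto_of_complete (hF.cauchySeq hx))

theorem TendstoUniformlyOn.leftInvOn {ι α β : Type*} [TopologicalSpace α] [UniformSpace β]
    [T2Space β] {l : Filter ι} [l.NeBot] {F : ι → α → β} {G : ι → β → α} {f : α → β}
    {g : β → α} {s : Set α} {t : Set β} (hF : TendstoUniformlyOn F f l s)
    (hf : ContinuousOn f s) (hG : ∀ y ∈ t, Tendsto (fun n => G n y) l (𝓝 (g y)))
    (hGs : ∀ n, MapsTo (G n) t s) (hgs : MapsTo g t s) (hFG : ∀ n, LeftInvOn (F n) (G n) t) :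
    LeftInvOn f g t := fun y hy =>
  tendsto_nhds_unique
    (hF.tendsto_comp (hf _ (hgs hy))
      (tendsto_nhdsWithin_iff.2 ⟨hG y hy, .of_forall fun n => hGs n hy⟩))
    (tendsto_const_nhds.congr fun n => (hFG n hy).symm)

theorem MonotoneOn.continuousOn_Icc_of_surjOn {f : ℝ → ℝ} {a b c d : ℝ} (hab : a ≤ b)
    (hf : MonotoneOn f (Icc a b)) (hmaps : MapsTo f (Icc a b) (Icc c d))
    (hsurj : SurjOn f (Icc a b) (Icc c d)) : ContinuousOn f (Icc a b) := by
  -- Continued by slope-one lines outside `[a, b]`, `f` becomes a monotone surjection of `ℝ`.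
  set π : ℝ → ℝ := fun x => max a (min b x)
  have hπ : ∀ x, π x ∈ Icc a b := fun x => ⟨le_max_left _ _, max_le hab (min_le_left _ _)⟩
  have hπ_of_mem : ∀ x ∈ Icc a b, π x = x := fun x hx => by simp [π, hx.1, hx.2]
  set F : ℝ → ℝ := fun x => f (π x) + (x - π x)
  have hF_mono : Monotone F := by
    intro x y hxy
    have hfπ := hf (hπ x) (hπ y) (max_le_max le_rfl (min_le_min le_rfl hxy))
    have hπ_lip : π y - π x ≤ y - x := by
      simp only [π, max_def, min_def]
      split_ifs <;> linarith
    simp only [F]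
    linarith
  have hF_surj : Function.Surjective F := by
    intro y
    have hfa := hmaps (left_mem_Icc.2 hab)
    have hfb := hmaps (right_mem_Icc.2 hab)
    rcases lt_or_ge y c with hyc | hcy
    · refine ⟨y - f a + a, ?_⟩
      have hya : y - f a + a ≤ a := by linarith [hfa.1]
      have : π (y - f a + a) = a := by
        simp only [π, min_eq_right (hya.trans hab), max_eq_left hya]
      simp only [F, this]
      ring
    rcases le_or_gt y d with hyd | hdy
    · obtain ⟨x, hx, rfl⟩ := hsurj ⟨hcy, hyd⟩
      exact ⟨x, by simp [F, hπ_of_mem x hx]⟩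
    · refine ⟨y - f b + b, ?_⟩
      have hyb : b ≤ y - f b + b := by linarith [hfb.2]
      have : π (y - f b + b) = b := by simp only [π, min_eq_left hyb, max_eq_right hab]
      simp only [F, this]
      ring
  exact (hF_mono.continuous_of_surjective hF_surj).continuousOn.congr fun x hx => by
    simp [F, hπ_of_mem x hx]

theorem hasDerivWithinAt_integral_Icc {f : ℝ → ℝ} {a b x : ℝ} (hf : ContinuousOn f (Icc a b))
    (hx : x ∈ Icc a b) : HasDerivWithinAt (fun u => ∫ t in a..u, f t) (f x) (Icc a b) x := by
  have : Fact (x ∈ Icc a b) := ⟨hx⟩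
  have hsub : uIcc a x ⊆ Icc a b := uIcc_subset_Icc (left_mem_Icc.2 (hx.1.trans hx.2)) hx
  exact intervalIntegral.integral_hasDerivWithinAt_right (hf.mono hsub).intervalIntegrable
    (hf.stronglyMeasurableAtFilter_nhdsWithin measurableSet_Icc x) (hf x hx)

theorem ContDiffOn.integral_derivWithin_Icc_eq_sub {f : ℝ → ℝ} {a b x : ℝ} (hab : a < b)
    (hf : ContDiffOn ℝ 1 f (Icc a b)) (hx : x ∈ Icc a b) :
    ∫ t in a..x, derivWithin f (Icc a b) t = f x - f a := by
  have hsub : Icc a x ⊆ Icc a b := Icc_subset_Icc_right hx.2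
  refine intervalIntegral.integral_eq_sub_of_hasDerivAt_of_le hx.1 (hf.continuousOn.mono hsub)
    (fun t ht => ?_) ?_
  · exact (hf.differentiableOn one_ne_zero t (hsub (Ioo_subset_Icc_self ht))).hasDerivWithinAt
      |>.hasDerivAt (Icc_mem_nhds ht.1 (ht.2.trans_le hx.2))
  · exact ((hf.continuousOn_derivWithin (uniqueDiffOn_Icc hab) le_rfl).mono
      (uIcc_subset_Icc (left_mem_Icc.2 hab.le) hx)).intervalIntegrable

theorem contDiffOn_Icc_of_tendstoUniformlyOn_derivWithin {f : ℕ → ℝ → ℝ} {g g' : ℝ → ℝ}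
    {a b : ℝ} (hab : a < b) (hf : ∀ n, ContDiffOn ℝ 1 (f n) (Icc a b))
    (hfg : ∀ x ∈ Icc a b, Tendsto (fun n => f n x) atTop (𝓝 (g x)))
    (hf' : TendstoUniformlyOn (fun n => derivWithin (f n) (Icc a b)) g' atTop (Icc a b)) :
    ContDiffOn ℝ 1 g (Icc a b) ∧ EqOn (derivWithin g (Icc a b)) g' (Icc a b) := by
  have hf'_cont : ∀ n, ContinuousOn (derivWithin (f n) (Icc a b)) (Icc a b) := fun n =>
    (hf n).continuousOn_derivWithin (uniqueDiffOn_Icc hab) le_rfl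
  have hg'_cont : ContinuousOn g' (Icc a b) := hf'.continuousOn (.of_forall hf'_cont)
  have hg_eq : EqOn g (fun x => g a + ∫ t in a..x, g' t) (Icc a b) := by
    intro x hx
    have hsub : uIcc a x ⊆ Icc a b := uIcc_subset_Icc (left_mem_Icc.2 hab.le) hx
    have hint := (hf'.mono hsub).tendsto_intervalIntegral_of_continuousOn (μ := volume)
      (.of_forall fun n => (hf'_cont n).mono hsub)
    refine tendsto_nhds_unique (hfg x hx) (((hfg a (left_mem_Icc.2 hab.le)).add hint).congr ?_)
    intro n
    rw [(hf n).integral_derivWithin_Icc_eq_sub hab hx]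
    ring
  have hderiv : ∀ x ∈ Icc a b, HasDerivWithinAt g (g' x) (Icc a b) x := fun x hx =>
    ((hasDerivWithinAt_integral_Icc hg'_cont hx).const_add (g a)).congr_of_mem hg_eq hx
  have heq : EqOn (derivWithin g (Icc a b)) g' (Icc a b) := fun x hx =>
    (hderiv x hx).derivWithin (uniqueDiffOn_Icc hab x hx)
  exact ⟨(contDiffOn_one_iff_derivWithin (uniqueDiffOn_Icc hab)).2
    ⟨fun x hx => (hderiv x hx).differentiableWithinAt, hg'_cont.congr heq⟩, heq⟩

theorem clampI_mem (x : ℝ) : clampI x ∈ Icc (0 : ℝ) 1 :=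
  ⟨le_max_left _ _, max_le zero_le_one (min_le_left _ _)⟩

theorem ProbVec.of_tendsto {ι : Type*} {l : Filter ι} [l.NeBot] {k : ℕ} {q : ι → Fin k → ℝ}
    {p : Fin k → ℝ} (hq : ∀ n, ProbVec (q n)) (hqp : ∀ i, Tendsto (fun n => q n i) l (𝓝 (p i))) :
    ProbVec p :=
  ⟨fun i => ge_of_tendsto' (hqp i) fun n => (hq n).1 i,
    tendsto_nhds_unique (tendsto_finsetSum _ fun i _ => hqp i)
      (tendsto_const_nhds.congr fun n => (hq n).2.symm)⟩

theorem CPlus.of_tendstoUniformly {β : ℝ} (hβ : 0 < β) {f : ℕ → ℝ → ℝ} {g D₀ D₁ : ℝ → ℝ}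
    (hf : ∀ n, CPlus β (f n)) (hfg : TendstoUniformly f g atTop)
    (hD₀ : TendstoUniformlyOn (fun n => derivWithin (f n) (Icc 0 β)) D₀ atTop (Icc 0 β))
    (hD₁ : TendstoUniformlyOn (fun n => derivWithin (f n) (Icc (1 - β) 1)) D₁ atTop
      (Icc (1 - β) 1)) :
    CPlus β g where
  mapsTo x hx :=
    isClosed_Icc.mem_of_tendsto (hfg.tendsto_at x) (.of_forall fun n => (hf n).mapsTo hx)
  contOn := hfg.tendstoUniformlyOn.continuousOn (.of_forall fun n => (hf n).contOn)
  mono x hx y hy hxy :=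
    le_of_tendsto_of_tendsto' (hfg.tendsto_at x) (hfg.tendsto_at y) fun n => (hf n).mono hx hy hxy
  map_zero := tendsto_nhds_unique (hfg.tendsto_at 0)
    (tendsto_const_nhds.congr fun n => (hf n).map_zero.symm)
  map_one := tendsto_nhds_unique (hfg.tendsto_at 1)
    (tendsto_const_nhds.congr fun n => (hf n).map_one.symm)
  c1_left := (contDiffOn_Icc_of_tendstoUniformlyOn_derivWithin hβ (fun n => (hf n).c1_left)
    (fun x _ => hfg.tendsto_at x) hD₀).1
  c1_right := (contDiffOn_Icc_of_tendstoUniformlyOn_derivWithin (by linarith)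
    (fun n => (hf n).c1_right) (fun x _ => hfg.tendsto_at x) hD₁).1

namespace Sys

variable {β : ℝ} {k : ℕ}

theorem ext {A B : Sys β k} (hg : A.g = B.g) (hginv : A.ginv = B.ginv) (hp : A.p = B.p) :
    A = B := by
  cases A
  cases B
  subst hg hginv hp
  rfl

theorem continuousOn_ginv (A : Sys β k) (i : Fin k) : ContinuousOn (A.ginv i) (Icc 0 1) :=
  (Function.monotoneOn_of_rightInvOn_of_mapsTo (A.cplus i).mono (A.right_inv i)
    (A.ginv_mapsTo i)).continuousOn_Icc_of_surjOn zero_le_one (A.ginv_mapsTo i)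
    fun x hx => ⟨A.g i x, (A.cplus i).mapsTo hx, A.left_inv i x hx⟩

theorem continuousOn_derivWithin_left (hβ : 0 < β) (A : Sys β k) (i : Fin k) :
    ContinuousOn (derivWithin (A.g i) (Icc 0 β)) (Icc 0 β) :=
  (A.cplus i).c1_left.continuousOn_derivWithin (uniqueDiffOn_Icc hβ) le_rfl

theorem continuousOn_derivWithin_right (hβ : 0 < β) (A : Sys β k) (i : Fin k) :
    ContinuousOn (derivWithin (A.g i) (Icc (1 - β) 1)) (Icc (1 - β) 1) :=
  (A.cplus i).c1_right.continuousOn_derivWithin (uniqueDiffOn_Icc (by linarith)) le_rfl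

end Sys

section Metric

variable {β : ℝ} {k : ℕ}

def dSysTerm (A B : Sys β k) (i : Fin k) : ℝ :=
  |A.p i - B.p i|
    + supOn (Icc (0 : ℝ) 1) (fun x => A.g i x - B.g i x)
    + supOn (Icc (0 : ℝ) 1) (fun x => A.ginv i x - B.ginv i x)
    + max
        (supOn (Icc (0 : ℝ) β)
          (fun x => derivWithin (A.g i) (Icc (0 : ℝ) β) x -
            derivWithin (B.g i) (Icc (0 : ℝ) β) x))
        (supOn (Icc (1 - β) 1)
          (fun x => derivWithin (A.g i) (Icc (1 - β) 1) x -
            derivWithin (B.g i) (Icc (1 - β) 1) x))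

theorem dSys_eq_sum_dSysTerm (A B : Sys β k) : dSys A B = ∑ i, dSysTerm A B i := rfl

theorem le_dSysTerm (A B : Sys β k) (i : Fin k) :
    |A.p i - B.p i| ≤ dSysTerm A B i ∧
    supOn (Icc (0 : ℝ) 1) (fun x => A.g i x - B.g i x) ≤ dSysTerm A B i ∧
    supOn (Icc (0 : ℝ) 1) (fun x => A.ginv i x - B.ginv i x) ≤ dSysTerm A B i ∧
    max
      (supOn (Icc (0 : ℝ) β)
        (fun x => derivWithin (A.g i) (Icc (0 : ℝ) β) x - derivWithin (B.g i) (Icc (0 : ℝ) β) x))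
      (supOn (Icc (1 - β) 1)
        (fun x => derivWithin (A.g i) (Icc (1 - β) 1) x - derivWithin (B.g i) (Icc (1 - β) 1) x))
      ≤ dSysTerm A B i := by
  have key (a b c d : ℝ) (ha : 0 ≤ a) (hb : 0 ≤ b) (hc : 0 ≤ c) (hd : 0 ≤ d) :
      a ≤ a + b + c + d ∧ b ≤ a + b + c + d ∧ c ≤ a + b + c + d ∧ d ≤ a + b + c + d := by
    refine ⟨?_, ?_, ?_, ?_⟩ <;> linarith
  exact key _ _ _ _ (abs_nonneg _) (supOn_nonneg _ _) (supOn_nonneg _ _)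
    (le_max_of_le_left (supOn_nonneg _ _))

theorem dSysTerm_nonneg (A B : Sys β k) (i : Fin k) : 0 ≤ dSysTerm A B i :=
  (abs_nonneg _).trans (le_dSysTerm A B i).1

theorem dSysTerm_le_dSys (A B : Sys β k) (i : Fin k) : dSysTerm A B i ≤ dSys A B :=
  Finset.single_le_sum (fun j _ => dSysTerm_nonneg A B j) (Finset.mem_univ i)

theorem dSys_nonneg (A B : Sys β k) : 0 ≤ dSys A B :=
  Finset.sum_nonneg fun i _ => dSysTerm_nonneg A B i

theorem dSys_comm (A B : Sys β k) : dSys A B = dSys B A := by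
  simp only [dSys, supOn, abs_sub_comm]

theorem dSys_self (A : Sys β k) : dSys A A = 0 := by
  simp [dSys, supOn_zero]

theorem dSys_triangle (hβ : 0 < β) (A B C : Sys β k) : dSys A C ≤ dSys A B + dSys B C := by
  simp only [dSys_eq_sum_dSysTerm, ← Finset.sum_add_distrib]
  gcongr with i
  have hp := abs_sub_le (A.p i) (B.p i) (C.p i)
  have hg := isCompact_Icc.supOn_sub_le_add (A.cplus i).contOn (B.cplus i).contOn
    (C.cplus i).contOn
  have hginv := isCompact_Icc.supOn_sub_le_add (A.continuousOn_ginv i) (B.continuousOn_ginv i)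
    (C.continuousOn_ginv i)
  have hl := isCompact_Icc.supOn_sub_le_add (A.continuousOn_derivWithin_left hβ i)
    (B.continuousOn_derivWithin_left hβ i) (C.continuousOn_derivWithin_left hβ i)
  have hr := isCompact_Icc.supOn_sub_le_add (A.continuousOn_derivWithin_right hβ i)
    (B.continuousOn_derivWithin_right hβ i) (C.continuousOn_derivWithin_right hβ i)
  have hmax := (max_le_max hl hr).trans max_add_add_le_max_add_max
  unfold dSysTerm
  linarith

theorem abs_p_sub_le_dSys (A B : Sys β k) (i : Fin k) : |A.p i - B.p i| ≤ dSys A B :=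
  (le_dSysTerm A B i).1.trans (dSysTerm_le_dSys A B i)

theorem abs_g_sub_le_dSys (A B : Sys β k) (i : Fin k) (x : ℝ) :
    |A.g i x - B.g i x| ≤ dSys A B := by
  rw [A.g_clamp i x, B.g_clamp i x]
  exact (isCompact_Icc.abs_le_supOn ((A.cplus i).contOn.sub (B.cplus i).contOn)
    (clampI_mem x)).trans ((le_dSysTerm A B i).2.1.trans (dSysTerm_le_dSys A B i))

theorem abs_ginv_sub_le_dSys (A B : Sys β k) (i : Fin k) (x : ℝ) :
    |A.ginv i x - B.ginv i x| ≤ dSys A B := by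
  rw [A.ginv_clamp i x, B.ginv_clamp i x]
  exact (isCompact_Icc.abs_le_supOn ((A.continuousOn_ginv i).sub (B.continuousOn_ginv i))
    (clampI_mem x)).trans ((le_dSysTerm A B i).2.2.1.trans (dSysTerm_le_dSys A B i))

theorem abs_derivWithin_left_sub_le_dSys (hβ : 0 < β) (A B : Sys β k) (i : Fin k) {x : ℝ}
    (hx : x ∈ Icc 0 β) :
    |derivWithin (A.g i) (Icc 0 β) x - derivWithin (B.g i) (Icc 0 β) x| ≤ dSys A B :=
  (isCompact_Icc.abs_le_supOn ((A.continuousOn_derivWithin_left hβ i).sub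
    (B.continuousOn_derivWithin_left hβ i)) hx).trans <| (le_max_left _ _).trans <|
    (le_dSysTerm A B i).2.2.2.trans (dSysTerm_le_dSys A B i)

theorem abs_derivWithin_right_sub_le_dSys (hβ : 0 < β) (A B : Sys β k) (i : Fin k) {x : ℝ}
    (hx : x ∈ Icc (1 - β) 1) :
    |derivWithin (A.g i) (Icc (1 - β) 1) x - derivWithin (B.g i) (Icc (1 - β) 1) x| ≤
      dSys A B :=
  (isCompact_Icc.abs_le_supOn ((A.continuousOn_derivWithin_right hβ i).sub
    (B.continuousOn_derivWithin_right hβ i)) hx).trans <| (le_max_right _ _).trans <|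
    (le_dSysTerm A B i).2.2.2.trans (dSysTerm_le_dSys A B i)

theorem dSys_eq_zero_iff {A B : Sys β k} : dSys A B = 0 ↔ A = B := by
  refine ⟨fun h => ?_, fun h => h ▸ dSys_self A⟩
  have h_eq {a b : ℝ} (hab : |a - b| ≤ dSys A B) : a = b :=
    sub_eq_zero.1 (abs_nonpos_iff.1 (h ▸ hab))
  exact Sys.ext (funext₂ fun i x => h_eq (abs_g_sub_le_dSys A B i x))
    (funext₂ fun i x => h_eq (abs_ginv_sub_le_dSys A B i x))
    (funext fun i => h_eq (abs_p_sub_le_dSys A B i))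

theorem tendsto_dSys_of_tendstoUniformlyOn {u : ℕ → Sys β k} {L : Sys β k}
    (hp : ∀ i, Tendsto (fun n => (u n).p i) atTop (𝓝 (L.p i)))
    (hg : ∀ i, TendstoUniformlyOn (fun n => (u n).g i) (L.g i) atTop (Icc 0 1))
    (hginv : ∀ i, TendstoUniformlyOn (fun n => (u n).ginv i) (L.ginv i) atTop (Icc 0 1))
    (hD₀ : ∀ i, TendstoUniformlyOn (fun n => derivWithin ((u n).g i) (Icc 0 β))
      (derivWithin (L.g i) (Icc 0 β)) atTop (Icc 0 β))
    (hD₁ : ∀ i, TendstoUniformlyOn (fun n => derivWithin ((u n).g i) (Icc (1 - β) 1))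
      (derivWithin (L.g i) (Icc (1 - β) 1)) atTop (Icc (1 - β) 1)) :
    Tendsto (fun n => dSys (u n) L) atTop (𝓝 0) := by
  simpa [dSys] using tendsto_finsetSum Finset.univ fun i _ =>
    ((((hp i).sub_const (L.p i)).abs.add (hg i).tendsto_supOn_sub).add
      (hginv i).tendsto_supOn_sub).add ((hD₀ i).tendsto_supOn_sub.max (hD₁ i).tendsto_supOn_sub)

end Metric

section Completeness

variable {β : ℝ} {k : ℕ}

theorem exists_tendsto_dSys_of_tendstoUniformly (hβ : 0 < β) (u : ℕ → Sys β k)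
    {g ginv : Fin k → ℝ → ℝ} {p : Fin k → ℝ} {D₀ D₁ : Fin k → ℝ → ℝ}
    (hp : ∀ i, Tendsto (fun n => (u n).p i) atTop (𝓝 (p i)))
    (hg : ∀ i, TendstoUniformly (fun n => (u n).g i) (g i) atTop)
    (hginv : ∀ i, TendstoUniformly (fun n => (u n).ginv i) (ginv i) atTop)
    (hD₀ : ∀ i, TendstoUniformlyOn (fun n => derivWithin ((u n).g i) (Icc 0 β)) (D₀ i) atTop
      (Icc 0 β))
    (hD₁ : ∀ i, TendstoUniformlyOn (fun n => derivWithin ((u n).g i) (Icc (1 - β) 1)) (D₁ i)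
      atTop (Icc (1 - β) 1))
    (hg_clamp : ∀ i x, g i x = g i (clampI x)) (hginv_clamp : ∀ i x, ginv i x = ginv i (clampI x)) :
    ∃ L : Sys β k, Tendsto (fun n => dSys (u n) L) atTop (𝓝 0) := by
  have hcplus i : CPlus β (g i) :=
    CPlus.of_tendstoUniformly hβ (fun n => (u n).cplus i) (hg i) (hD₀ i) (hD₁ i)
  have hginv_maps i : MapsTo (ginv i) (Icc 0 1) (Icc 0 1) := fun x hx =>
    isClosed_Icc.mem_of_tendsto ((hginv i).tendsto_at x)
      (.of_forall fun n => (u n).ginv_mapsTo i hx)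
  have hginv_cont i : ContinuousOn (ginv i) (Icc 0 1) :=
    (hginv i).tendstoUniformlyOn.continuousOn (.of_forall fun n => (u n).continuousOn_ginv i)
  let L : Sys β k :=
    { g, ginv, p, cplus := hcplus, ginv_mapsTo := hginv_maps, g_clamp := hg_clamp,
      ginv_clamp := hginv_clamp
      prob := ProbVec.of_tendsto (fun n => (u n).prob) hp
      left_inv := fun i => (hginv i).tendstoUniformlyOn.leftInvOn (hginv_cont i)
        (fun x _ => (hg i).tendsto_at x) (fun n => ((u n).cplus i).mapsTo) (hcplus i).mapsTo
        fun n => (u n).left_inv i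
      right_inv := fun i => (hg i).tendstoUniformlyOn.leftInvOn (hcplus i).contOn
        (fun y _ => (hginv i).tendsto_at y) (fun n => (u n).ginv_mapsTo i) (hginv_maps i)
        fun n => (u n).right_inv i }
  refine ⟨L, tendsto_dSys_of_tendstoUniformlyOn hp (fun i => (hg i).tendstoUniformlyOn)
    (fun i => (hginv i).tendstoUniformlyOn) (fun i => (hD₀ i).congr_right ?_)
    (fun i => (hD₁ i).congr_right ?_)⟩
  · exact (contDiffOn_Icc_of_tendstoUniformlyOn_derivWithin hβ (fun n => ((u n).cplus i).c1_left)
      (fun x _ => (hg i).tendsto_at x) (hD₀ i)).2.symm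
  · exact (contDiffOn_Icc_of_tendstoUniformlyOn_derivWithin (by linarith)
      (fun n => ((u n).cplus i).c1_right) (fun x _ => (hg i).tendsto_at x) (hD₁ i)).2.symm

theorem exists_tendsto_dSys_of_cauchy (hβ : 0 < β) (u : ℕ → Sys β k)
    (hu : ∀ ε > (0 : ℝ), ∃ N : ℕ, ∀ m ≥ N, ∀ n ≥ N, dSys (u m) (u n) < ε) :
    ∃ L : Sys β k, Tendsto (fun n => dSys (u n) L) atTop (𝓝 0) := by
  have hp i : Tendsto (fun n => (u n).p i) atTop (𝓝 (limUnder atTop fun n => (u n).p i)) :=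
    tendsto_nhds_limUnder <| cauchySeq_tendsto_of_complete <|
      Metric.cauchySeq_iff.2 fun ε hε => (hu ε hε).imp fun _ hN m hm n hn =>
        ((Real.dist_eq _ _).trans_le (abs_p_sub_le_dSys (u m) (u n) i)).trans_lt (hN m hm n hn)
  have hg i := tendstoUniformlyOn_univ.1 <| UniformCauchySeqOn.tendstoUniformlyOn_limUnder <|
    uniformCauchySeqOn_of_abs_sub_le hu fun m n x _ => abs_g_sub_le_dSys (u m) (u n) i x
  have hginv i := tendstoUniformlyOn_univ.1 <| UniformCauchySeqOn.tendstoUniformlyOn_limUnder <|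
    uniformCauchySeqOn_of_abs_sub_le hu fun m n x _ => abs_ginv_sub_le_dSys (u m) (u n) i x
  have hD₀ i := UniformCauchySeqOn.tendstoUniformlyOn_limUnder <|
    uniformCauchySeqOn_of_abs_sub_le (F := fun n => derivWithin ((u n).g i) (Icc 0 β))
      (s := Icc 0 β) hu fun m n _ hx => abs_derivWithin_left_sub_le_dSys hβ (u m) (u n) i hx
  have hD₁ i := UniformCauchySeqOn.tendstoUniformlyOn_limUnder <|
    uniformCauchySeqOn_of_abs_sub_le (F := fun n => derivWithin ((u n).g i) (Icc (1 - β) 1))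
      (s := Icc (1 - β) 1) hu fun m n _ hx => abs_derivWithin_right_sub_le_dSys hβ (u m) (u n) i hx
  exact exists_tendsto_dSys_of_tendstoUniformly hβ u hp hg hginv hD₀ hD₁
    (fun i x => congrArg (limUnder atTop) (funext fun n => (u n).g_clamp i x))
    (fun i x => congrArg (limUnder atTop) (funext fun n => (u n).ginv_clamp i x))

end Completeness

/-- `(F₀, d)` is a complete metric space: `d` is symmetric,
vanishes exactly on the diagonal, satisfies the triangle inequality, is
nonnegative, and every Cauchy sequence converges. -/
theorem F0_complete_metric (β : ℝ) (hβ : 0 < β) (k : ℕ) :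
    (∀ A B : Sys β k, dSys A B = dSys B A) ∧
    (∀ A B : Sys β k, dSys A B = 0 ↔ A = B) ∧
    (∀ A B C : Sys β k, dSys A C ≤ dSys A B + dSys B C) ∧
    (∀ A B : Sys β k, 0 ≤ dSys A B) ∧
    (∀ u : ℕ → Sys β k,
      (∀ ε > (0 : ℝ), ∃ N : ℕ, ∀ m ≥ N, ∀ n ≥ N, dSys (u m) (u n) < ε) →
      ∃ L : Sys β k, Tendsto (fun n => dSys (u n) L) atTop (𝓝 0)) :=
  ⟨dSys_comm, fun _ _ => dSys_eq_zero_iff, dSys_triangle hβ, dSys_nonneg,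
    exists_tendsto_dSys_of_cauchy hβ⟩
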